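/- arXiv:2003.09254 — 4 statements merged into one kernel-verified Lean document; each statement's English description precedes it below -/
import Mathlib

section
/- Let (Ω, P) be a probability space with sigma algebras F1 ⊆ F2, where P is defined on F2 and F2 is atomless conditionally to F1. If A' ∈ F1 and C ∈ F2 satisfies C ⊆ A' and E[1_C | F1] > 0 almost surely on A', then there exists a decreasing sequence (B_n)_{n≥0} of F2-measurable subsets of C such that for each n, 0 < E[1_{B_n} | F1] ≤ 2^{-n} almost surely on A'. -/
open MeasureTheory ProbabilityTheory Set
open scoped ENNReal

/-- The conditional expectation (under `P`, defined on `F2`) of the indicator of `A`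
given the sub-σ-algebra `F1`. -/
noncomputable def cexpInd {Ω : Type*} (F1 F2 : MeasurableSpace Ω) (P : @Measure Ω F2)
    (A : Set Ω) : Ω → ℝ :=
  P[A.indicator (fun _ => (1 : ℝ)) | F1]

/-- `F2` is atomless conditionally to `F1`: for every `A ∈ F2` there is `B ∈ F2`, `B ⊆ A`,
with `0 < E[1_B | F1] < E[1_A | F1]` almost surely on the set `{E[1_A | F1] > 0}`. -/
def CondAtomless {Ω : Type*} (F1 F2 : MeasurableSpace Ω) (P : @Measure Ω F2) : Prop :=
  ∀ A : Set Ω, MeasurableSet[F2] A → ∃ B : Set Ω, MeasurableSet[F2] B ∧ B ⊆ A ∧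
    ∀ᵐ ω ∂P, 0 < cexpInd F1 F2 P A ω →
      0 < cexpInd F1 F2 P B ω ∧ cexpInd F1 F2 P B ω < cexpInd F1 F2 P A ω

/-- Halving lemma: from conditional atomlessness we can find a subset whose conditional
indicator expectation is at most half, and still positive, a.e. on the positivity set. -/
lemma half_lemma {Ω : Type*} (F1 F2 : MeasurableSpace Ω) (hle : F1 ≤ F2)
    (P : @Measure Ω F2) (hP : @IsProbabilityMeasure Ω F2 P)
    (hatomless : CondAtomless F1 F2 P)
    (A : Set Ω) (hA : MeasurableSet[F2] A) :
    ∃ B : Set Ω, MeasurableSet[F2] B ∧ B ⊆ A ∧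
      ∀ᵐ ω ∂P, 0 < cexpInd F1 F2 P A ω →
        0 < cexpInd F1 F2 P B ω ∧ cexpInd F1 F2 P B ω ≤ cexpInd F1 F2 P A ω / 2 := by
  obtain ⟨B, hB, hBA, hae⟩ := hatomless A hA
  set f := cexpInd F1 F2 P A with hf_def
  set g := cexpInd F1 F2 P B with hg_def
  set h := cexpInd F1 F2 P (A \ B) with hh_def
  have hfm : StronglyMeasurable[F1] f := stronglyMeasurable_condExp
  have hgm : StronglyMeasurable[F1] g := stronglyMeasurable_condExp
  have hS : MeasurableSet[F1] {ω | g ω ≤ f ω / 2} :=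
    measurableSet_le hgm.measurable ((hfm.measurable).div_const 2)
  set S := {ω | g ω ≤ f ω / 2} with hS_def
  set B' := (S ∩ B) ∪ (Sᶜ ∩ (A \ B)) with hB'_def
  have hB'm : MeasurableSet[F2] B' :=
    ((hle _ hS).inter hB).union ((hle _ hS.compl).inter (hA.diff hB))
  have hB'A : B' ⊆ A := by
    intro ω hω
    rcases hω with ⟨_, hω⟩ | ⟨_, hω, _⟩
    · exact hBA hω
    · exact hω
  refine ⟨B', hB'm, hB'A, ?_⟩
  have hintB : Integrable (B.indicator (fun _ => (1 : ℝ))) P :=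
    (integrable_const (1 : ℝ)).indicator hB
  have hintAB : Integrable ((A \ B).indicator (fun _ => (1 : ℝ))) P :=
    (integrable_const (1 : ℝ)).indicator (hA.diff hB)
  -- f = g + h a.e.
  have hsplit : f =ᵐ[P] g + h := by
    have heq : A.indicator (fun _ => (1 : ℝ)) =
        B.indicator (fun _ => (1 : ℝ)) + (A \ B).indicator (fun _ => (1 : ℝ)) := by
      funext ω
      by_cases hωB : ω ∈ B
      · simp [Set.indicator_apply, hωB, hBA hωB]
      · by_cases hωA : ω ∈ A <;> simp [Set.indicator_apply, hωB, hωA]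
    calc f = P[B.indicator (fun _ => (1 : ℝ)) + (A \ B).indicator (fun _ => (1 : ℝ)) | F1] := by
            rw [hf_def]; unfold cexpInd; rw [heq]
      _ =ᵐ[P] g + h := condExp_add hintB hintAB F1
  -- cexpInd B' = S.indicator g + Sᶜ.indicator h a.e.
  have hB'eq : cexpInd F1 F2 P B' =ᵐ[P] S.indicator g + Sᶜ.indicator h := by
    have heq : B'.indicator (fun _ => (1 : ℝ)) =
        S.indicator (B.indicator (fun _ => (1 : ℝ)))
          + Sᶜ.indicator ((A \ B).indicator (fun _ => (1 : ℝ))) := by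
      funext ω
      by_cases hωS : ω ∈ S
      · by_cases hωB : ω ∈ B <;>
          simp [hB'_def, Set.indicator_apply, hωS, hωB]
      · by_cases hωAB : ω ∈ A \ B <;>
          simp [hB'_def, Set.indicator_apply, hωS, hωAB]
    have h1 : P[S.indicator (B.indicator (fun _ => (1 : ℝ))) | F1]
        =ᵐ[P] S.indicator g := condExp_indicator hintB hS
    have h2 : P[Sᶜ.indicator ((A \ B).indicator (fun _ => (1 : ℝ))) | F1]
        =ᵐ[P] Sᶜ.indicator h := condExp_indicator hintAB hS.compl
    calc cexpInd F1 F2 P B'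
        = P[S.indicator (B.indicator (fun _ => (1 : ℝ)))
            + Sᶜ.indicator ((A \ B).indicator (fun _ => (1 : ℝ))) | F1] := by
            unfold cexpInd; rw [heq]
      _ =ᵐ[P] S.indicator g + Sᶜ.indicator h :=
          (condExp_add (hintB.indicator (hle _ hS))
            (hintAB.indicator (hle _ hS.compl)) F1).trans (h1.add h2)
  filter_upwards [hae, hsplit, hB'eq] with ω hω hsp hbe hpos
  obtain ⟨hg0, hgf⟩ := hω hpos
  have hsum : f ω = g ω + h ω := hsp
  rw [hbe]
  by_cases hωS : ω ∈ S
  · have hgle : g ω ≤ f ω / 2 := hωS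
    simp only [Set.indicator_apply, hωS, Pi.add_apply, if_true, Set.mem_compl_iff,
      not_true, if_false]
    constructor
    · simpa [hωS] using hg0
    · simp [hωS]
      linarith
  · have hgt : f ω / 2 < g ω := lt_of_not_ge hωS
    simp only [Pi.add_apply, Set.indicator_apply, hωS, Set.mem_compl_iff]
    constructor
    · simp [hωS]; linarith
    · simp [hωS]; linarith

theorem stmt0 {Ω : Type*} (F1 F2 : MeasurableSpace Ω) (hle : F1 ≤ F2)
    (P : @Measure Ω F2) (hP : @IsProbabilityMeasure Ω F2 P)
    (hatomless : CondAtomless F1 F2 P)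
    (A' : Set Ω) (hA' : MeasurableSet[F1] A')
    (C : Set Ω) (hC : MeasurableSet[F2] C) (hCA' : C ⊆ A')
    (hpos : ∀ᵐ ω ∂P, ω ∈ A' → 0 < cexpInd F1 F2 P C ω) :
    ∃ B : ℕ → Set Ω, Antitone B ∧ (∀ n, MeasurableSet[F2] (B n)) ∧ (∀ n, B n ⊆ C) ∧
      ∀ n : ℕ, ∀ᵐ ω ∂P, ω ∈ A' →
        0 < cexpInd F1 F2 P (B n) ω ∧ cexpInd F1 F2 P (B n) ω ≤ (2 : ℝ)⁻¹ ^ n := by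
  haveI := hP
  choose! F hFm hFsub hFae using half_lemma F1 F2 hle P hP hatomless
  set B : ℕ → Set Ω := fun n => F^[n] C with hB_def
  have hB0 : B 0 = C := rfl
  have hBsucc : ∀ n, B (n + 1) = F (B n) := fun n => Function.iterate_succ_apply' F n C
  have hmeas : ∀ n, MeasurableSet[F2] (B n) := by
    intro n
    induction n with
    | zero => exact hC
    | succ n ih => rw [hBsucc]; exact hFm _ ih
  have hsub_succ : ∀ n, B (n + 1) ⊆ B n := fun n => by
    rw [hBsucc]; exact hFsub _ (hmeas n)
  have hanti : Antitone B := antitone_nat_of_succ_le hsub_succ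
  have hsubC : ∀ n, B n ⊆ C := by
    intro n
    induction n with
    | zero => exact le_refl C
    | succ n ih => exact (hsub_succ n).trans ih
  refine ⟨B, hanti, hmeas, hsubC, ?_⟩
  -- upper bound by 1
  have hle1 : cexpInd F1 F2 P C ≤ᵐ[P] fun _ => (1 : ℝ) := by
    have h1 : cexpInd F1 F2 P C ≤ᵐ[P] P[(fun _ => (1 : ℝ)) | F1] :=
      condExp_mono ((integrable_const (1 : ℝ)).indicator hC) (integrable_const 1)
        (Filter.Eventually.of_forall fun ω => by by_cases h : ω ∈ C <;> simp [Set.indicator_apply, h])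
    have h2 : P[(fun _ => (1 : ℝ)) | F1] = fun _ => (1 : ℝ) := condExp_const hle 1
    rw [h2] at h1
    exact h1
  intro n
  induction n with
  | zero =>
    filter_upwards [hpos, hle1] with ω h1 h2 hω
    exact ⟨h1 hω, by simpa [hB0] using h2⟩
  | succ n ih =>
    filter_upwards [ih, hFae (B n) (hmeas n)] with ω h1 h2 hω
    obtain ⟨hp, hb⟩ := h1 hω
    obtain ⟨hp', hb'⟩ := h2 hp
    rw [hBsucc]
    refine ⟨hp', ?_⟩
    have : (2 : ℝ)⁻¹ ^ (n + 1) = (2 : ℝ)⁻¹ ^ n * 2⁻¹ := pow_succ _ _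
    rw [this]
    linarith
end

section
/- Suppose F2 is atomless conditionally to F1. Then for every C ∈ F2 and every F1-measurable function h : Ω → [0,1] there exists a set B ∈ F2 with B ⊆ C such that E[1_B | F1] = h · E[1_C | F1] almost surely. -/
open MeasureTheory ProbabilityTheory Set
open scoped ENNReal

/-!
Conditional atomlessness, iterated and glued along `F1`-measurable sets, gives
subsets of any `A` whose conditional probability is positive where that of `A` is and
arbitrarily small compared with it. Among the subsets `B ⊆ C` with `E[1_B | F1] ≤ g`, where
`g = h · E[1_C | F1]`, build greedily an increasing sequence whose every term almost maximises
`P` among admissible supersets of the previous one. Its union `B*` is still admissible, by an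
`L¹` limit argument. If `E[1_{B*} | F1] < g` on a non-null set, a small positive piece of
`C \ B*` can be added to `B*`, which contradicts the near-maximality of the sequence.
-/

open Filter Topology

lemma exists_monotone_seq_measureReal_le_add {α : Type*} {m : MeasurableSpace α}
    (μ : Measure α) [IsFiniteMeasure μ] {𝒢 : Set (Set α)} (h𝒢 : 𝒢.Nonempty)
    (ε : ℕ → ℝ) (hε : ∀ n, 0 < ε n) :
    ∃ B : ℕ → Set α, Monotone B ∧ (∀ n, B n ∈ 𝒢) ∧
      ∀ n, ∀ t ∈ 𝒢, B n ⊆ t → μ.real t ≤ μ.real (B (n + 1)) + ε n := by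
  have hnext : ∀ (n : ℕ) (b : 𝒢), ∃ c : 𝒢, b.1 ⊆ c.1 ∧
      ∀ t ∈ 𝒢, b.1 ⊆ t → μ.real t ≤ μ.real c + ε n := by
    intro n b
    set S := μ.real '' {t ∈ 𝒢 | b.1 ⊆ t}
    have hS : BddAbove S := ⟨μ.real univ, by
      rintro _ ⟨t, -, rfl⟩
      exact measureReal_mono (subset_univ t)⟩
    have hne : S.Nonempty := ⟨μ.real b, mem_image_of_mem _ ⟨b.2, subset_rfl⟩⟩
    obtain ⟨_, ⟨c, hc, rfl⟩, hlt⟩ := exists_lt_of_lt_csSup hne (sub_lt_self (sSup S) (hε n))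
    refine ⟨⟨c, hc.1⟩, hc.2, fun t ht hbt => ?_⟩
    linarith [le_csSup hS (mem_image_of_mem μ.real ⟨ht, hbt⟩)]
  choose next hnext_sub hnext_le using hnext
  let B : ℕ → 𝒢 := fun n => Nat.rec ⟨h𝒢.some, h𝒢.some_mem⟩ next n
  exact ⟨fun n => (B n).1, monotone_nat_of_le_succ fun n => hnext_sub n (B n), fun n => (B n).2,
    fun n => hnext_le n (B n)⟩

lemma ae_le_of_tendsto_integral {α : Type*} {m : MeasurableSpace α} {μ : Measure α}
    {f g : α → ℝ} {F : ℕ → α → ℝ} (hf : Integrable f μ) (hF : ∀ n, Integrable (F n) μ)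
    (hg : AEStronglyMeasurable g μ) (hFf : ∀ n, F n ≤ᵐ[μ] f) (hFg : ∀ n, F n ≤ᵐ[μ] g)
    (hlim : Tendsto (fun n => ∫ x, F n x ∂μ) atTop (𝓝 (∫ x, f x ∂μ))) : f ≤ᵐ[μ] g := by
  set p : α → ℝ := fun x => max (f x - g x) 0
  have hp_le : ∀ n, ∀ᵐ x ∂μ, p x ≤ f x - F n x := fun n => by
    filter_upwards [hFf n, hFg n] with x h1 h2
    exact max_le (by linarith) (by linarith)
  have hp_nonneg : 0 ≤ᵐ[μ] p := ae_of_all _ fun x => le_max_right _ _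
  have hp_int : Integrable p μ := by
    refine (hf.sub (hF 0)).mono' ((hf.1.sub hg).sup aestronglyMeasurable_const) ?_
    filter_upwards [hp_le 0] with x hx
    rw [Real.norm_of_nonneg (le_max_right _ _)]
    exact hx
  have hp_integral : ∫ x, p x ∂μ ≤ 0 := by
    have hgap := (tendsto_const_nhds (x := ∫ x, f x ∂μ)).sub hlim
    rw [sub_self] at hgap
    refine ge_of_tendsto' hgap fun n => ?_
    rw [← integral_sub hf (hF n)]
    exact integral_mono_ae hp_int (hf.sub (hF n)) (hp_le n)
  have hp_zero : p =ᵐ[μ] 0 := (integral_eq_zero_iff_of_nonneg_ae hp_nonneg hp_int).mp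
    (le_antisymm hp_integral (integral_nonneg_of_ae hp_nonneg))
  filter_upwards [hp_zero] with x hx
  have : max (f x - g x) 0 = 0 := hx
  linarith [le_max_left (f x - g x) 0]

lemma exists_measure_ne_zero_add_lt {α : Type*} {m : MeasurableSpace α} {μ : Measure α}
    {f g : α → ℝ} (h : ¬ g ≤ᵐ[μ] f) : ∃ δ > 0, μ {x | f x + δ < g x} ≠ 0 := by
  by_contra! hall
  refine h (measure_mono_null (fun x (hx : ¬ g x ≤ f x) => ?_) (measure_iUnion_null_iff.mpr
    fun k : ℕ => hall (1 / (k + 1)) Nat.one_div_pos_of_nat))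
  obtain ⟨k, hk⟩ := exists_nat_one_div_lt (sub_pos.mpr (not_le.mp hx))
  exact mem_iUnion.mpr ⟨k, show f x + 1 / (k + 1) < g x by linarith⟩

section cexpInd

variable {Ω : Type*} {F1 F2 : MeasurableSpace Ω} (P : @Measure Ω F2)

lemma cexpInd_nonneg (A : Set Ω) : 0 ≤ᵐ[P] cexpInd F1 F2 P A :=
  condExp_nonneg (ae_of_all _ fun _ => indicator_nonneg (fun _ _ => zero_le_one) _)

lemma measurable_cexpInd (A : Set Ω) : Measurable[F1] (cexpInd F1 F2 P A) :=
  stronglyMeasurable_condExp.measurable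

lemma cexpInd_empty : cexpInd F1 F2 P ∅ = 0 := by
  simp only [cexpInd, indicator_empty]
  exact condExp_zero

lemma cexpInd_ae_eq_zero {A : Set Ω} (hA : P A = 0) : cexpInd F1 F2 P A =ᵐ[P] 0 := by
  have h := condExp_congr_ae (m := F1) (indicator_meas_zero (f := fun _ => (1 : ℝ)) hA)
  rwa [condExp_zero] at h

variable [IsFiniteMeasure P]

lemma integrable_indicator_one {A : Set Ω} (hA : MeasurableSet[F2] A) :
    Integrable (A.indicator fun _ => (1 : ℝ)) P :=
  (integrable_const 1).indicator hA

lemma cexpInd_mono {A B : Set Ω} (hA : MeasurableSet[F2] A) (hB : MeasurableSet[F2] B)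
    (hBA : B ⊆ A) : cexpInd F1 F2 P B ≤ᵐ[P] cexpInd F1 F2 P A :=
  condExp_mono (integrable_indicator_one P hB) (integrable_indicator_one P hA)
    (ae_of_all _ (indicator_le_indicator_of_subset hBA fun _ => zero_le_one))

lemma cexpInd_le_one (hle : F1 ≤ F2) {A : Set Ω} (hA : MeasurableSet[F2] A) :
    cexpInd F1 F2 P A ≤ᵐ[P] 1 := by
  have h := condExp_mono (m := F1) (integrable_indicator_one P hA) (integrable_const (1 : ℝ))
    (ae_of_all _ (indicator_le_self' fun _ _ => zero_le_one))
  rwa [condExp_const hle] at h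

lemma cexpInd_union {A B : Set Ω} (hA : MeasurableSet[F2] A) (hB : MeasurableSet[F2] B)
    (hAB : Disjoint A B) :
    cexpInd F1 F2 P (A ∪ B) =ᵐ[P] cexpInd F1 F2 P A + cexpInd F1 F2 P B := by
  rw [cexpInd, indicator_union_of_disjoint hAB]
  exact condExp_add (integrable_indicator_one P hA) (integrable_indicator_one P hB) F1

lemma cexpInd_sdiff {A B : Set Ω} (hA : MeasurableSet[F2] A) (hB : MeasurableSet[F2] B)
    (hBA : B ⊆ A) :
    cexpInd F1 F2 P (A \ B) =ᵐ[P] cexpInd F1 F2 P A - cexpInd F1 F2 P B := by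
  rw [cexpInd, indicator_sdiff hBA]
  exact condExp_sub (integrable_indicator_one P hA) (integrable_indicator_one P hB) F1

lemma cexpInd_inter {A D : Set Ω} (hD : MeasurableSet[F1] D) (hA : MeasurableSet[F2] A) :
    cexpInd F1 F2 P (D ∩ A) =ᵐ[P] D.indicator (cexpInd F1 F2 P A) := by
  rw [cexpInd, ← indicator_indicator]
  exact condExp_indicator (integrable_indicator_one P hA) hD

lemma cexpInd_piecewise (hle : F1 ≤ F2) {A B D : Set Ω} (hD : MeasurableSet[F1] D)
    (hA : MeasurableSet[F2] A) (hB : MeasurableSet[F2] B) [DecidablePred (· ∈ D)] :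
    cexpInd F1 F2 P (D ∩ A ∪ Dᶜ ∩ B) =ᵐ[P] D.piecewise (cexpInd F1 F2 P A) (cexpInd F1 F2 P B) := by
  have hdisj : Disjoint (D ∩ A) (Dᶜ ∩ B) :=
    disjoint_compl_right.mono inter_subset_left inter_subset_left
  filter_upwards [cexpInd_union P ((hle _ hD).inter hA) ((hle _ hD).compl.inter hB) hdisj,
    cexpInd_inter P hD hA, cexpInd_inter P hD.compl hB] with ω hu h1 h2
  rw [hu, ← indicator_add_compl_eq_piecewise, Pi.add_apply, Pi.add_apply, h1, h2]

lemma integral_cexpInd (hle : F1 ≤ F2) {A : Set Ω} (hA : MeasurableSet[F2] A) :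
    ∫ ω, cexpInd F1 F2 P A ω ∂P = P.real A := by
  rw [cexpInd, integral_condExp hle, integral_indicator_const _ hA, smul_eq_mul, mul_one]

lemma cexpInd_iUnion_le_of_monotone (hle : F1 ≤ F2) {B : ℕ → Set Ω}
    (hB : ∀ n, MeasurableSet[F2] (B n)) (hBmono : Monotone B) {g : Ω → ℝ} (hg : Measurable[F1] g)
    (hBg : ∀ n, cexpInd F1 F2 P (B n) ≤ᵐ[P] g) : cexpInd F1 F2 P (⋃ n, B n) ≤ᵐ[P] g := by
  refine ae_le_of_tendsto_integral (F := fun n => cexpInd F1 F2 P (B n)) integrable_condExp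
    (fun _ => integrable_condExp)
    (hg.mono hle le_rfl).aestronglyMeasurable
    (fun n => cexpInd_mono P (MeasurableSet.iUnion hB) (hB n) (subset_iUnion B n)) hBg ?_
  have hint (n : ℕ) : ∫ ω, cexpInd F1 F2 P (B n) ω ∂P = P.real (B n) :=
    integral_cexpInd P hle (hB n)
  simp only [hint, integral_cexpInd P hle (MeasurableSet.iUnion hB)]
  exact (ENNReal.tendsto_toReal (measure_ne_top P _)).comp (tendsto_measure_iUnion_atTop hBmono)

end cexpInd

namespace CondAtomless

variable {Ω : Type*} {F1 F2 : MeasurableSpace Ω} {P : @Measure Ω F2} [IsFiniteMeasure P]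

lemma exists_subset_cexpInd_le_half (hat : CondAtomless F1 F2 P) (hle : F1 ≤ F2) {A : Set Ω}
    (hA : MeasurableSet[F2] A) :
    ∃ B : Set Ω, MeasurableSet[F2] B ∧ B ⊆ A ∧ ∀ᵐ ω ∂P,
      (0 < cexpInd F1 F2 P A ω → 0 < cexpInd F1 F2 P B ω) ∧
        cexpInd F1 F2 P B ω ≤ cexpInd F1 F2 P A ω / 2 := by
  classical
  obtain ⟨B', hB', hB'A, hB'pos⟩ := hat A hA
  set E : Set Ω := {ω | 2 * cexpInd F1 F2 P B' ω ≤ cexpInd F1 F2 P A ω}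
  have hE : MeasurableSet[F1] E :=
    measurableSet_le ((measurable_cexpInd P B').const_mul 2) (measurable_cexpInd P A)
  refine ⟨E ∩ B' ∪ Eᶜ ∩ (A \ B'), ((hle _ hE).inter hB').union ((hle _ hE).compl.inter
    (hA.diff hB')), union_subset (inter_subset_right.trans hB'A)
    (inter_subset_right.trans sdiff_subset), ?_⟩
  filter_upwards [cexpInd_piecewise P hle hE hB' (hA.diff hB'), cexpInd_sdiff P hA hB' hB'A,
    hB'pos] with ω hpw hsd hpos
  rw [hpw]
  by_cases hω : ω ∈ E
  · have hsmall : 2 * cexpInd F1 F2 P B' ω ≤ cexpInd F1 F2 P A ω := hω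
    rw [piecewise_eq_of_mem _ _ _ hω]
    exact ⟨fun h => (hpos h).1, by linarith⟩
  · have hlarge : cexpInd F1 F2 P A ω < 2 * cexpInd F1 F2 P B' ω := not_le.mp hω
    rw [piecewise_eq_of_notMem _ _ _ hω, hsd, Pi.sub_apply]
    exact ⟨fun h => by linarith [(hpos h).2], by linarith⟩

lemma exists_subset_cexpInd_le_pow (hat : CondAtomless F1 F2 P) (hle : F1 ≤ F2) {A : Set Ω}
    (hA : MeasurableSet[F2] A) (n : ℕ) :
    ∃ B : Set Ω, MeasurableSet[F2] B ∧ B ⊆ A ∧ ∀ᵐ ω ∂P,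
      (0 < cexpInd F1 F2 P A ω → 0 < cexpInd F1 F2 P B ω) ∧
        cexpInd F1 F2 P B ω ≤ (1 / 2) ^ n * cexpInd F1 F2 P A ω := by
  induction n with
  | zero => exact ⟨A, hA, subset_rfl, ae_of_all _ fun ω => ⟨id, by simp⟩⟩
  | succ n ih =>
    obtain ⟨B, hB, hBA, hBpos⟩ := ih
    obtain ⟨D, hD, hDB, hDpos⟩ := hat.exists_subset_cexpInd_le_half hle hB
    refine ⟨D, hD, hDB.trans hBA, ?_⟩
    filter_upwards [hBpos, hDpos] with ω hB hD
    refine ⟨fun h => hD.1 (hB.1 h), ?_⟩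
    calc cexpInd F1 F2 P D ω ≤ cexpInd F1 F2 P B ω / 2 := hD.2
      _ ≤ (1 / 2) ^ n * cexpInd F1 F2 P A ω / 2 := by gcongr; exact hB.2
      _ = (1 / 2) ^ (n + 1) * cexpInd F1 F2 P A ω := by ring

lemma exists_cexpInd_union_le (hat : CondAtomless F1 F2 P) (hle : F1 ≤ F2) {A B : Set Ω}
    (hA : MeasurableSet[F2] A) (hB : MeasurableSet[F2] B) (hBA : B ⊆ A) {g : Ω → ℝ}
    (hg : Measurable[F1] g) (hgA : g ≤ᵐ[P] cexpInd F1 F2 P A)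
    (hBg : cexpInd F1 F2 P B ≤ᵐ[P] g) (hgB : ¬ g ≤ᵐ[P] cexpInd F1 F2 P B) :
    ∃ D : Set Ω, MeasurableSet[F2] D ∧ D ⊆ A \ B ∧ P D ≠ 0 ∧
      cexpInd F1 F2 P (B ∪ D) ≤ᵐ[P] g := by
  obtain ⟨δ, hδ, hT⟩ := exists_measure_ne_zero_add_lt hgB
  set T : Set Ω := {ω | cexpInd F1 F2 P B ω + δ < g ω}
  have hTm : MeasurableSet[F1] T := measurableSet_lt ((measurable_cexpInd P B).add_const δ) hg
  have hA' : MeasurableSet[F2] (T ∩ (A \ B)) := (hle _ hTm).inter (hA.diff hB)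
  obtain ⟨n, hn⟩ := exists_pow_lt_of_lt_one hδ (by norm_num : (1 / 2 : ℝ) < 1)
  obtain ⟨D, hD, hDA', hDsmall⟩ := hat.exists_subset_cexpInd_le_pow hle hA' n
  have hDT : ∀ᵐ ω ∂P, (ω ∈ T → 0 < cexpInd F1 F2 P D ω ∧ cexpInd F1 F2 P D ω < δ) ∧
      (ω ∉ T → cexpInd F1 F2 P D ω ≤ 0) := by
    filter_upwards [hDsmall, cexpInd_inter P hTm (hA.diff hB), cexpInd_sdiff P hA hB hBA,
      cexpInd_le_one P hle hA', hgA] with ω hDω hinter hsd hA'1 hgAω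
    refine ⟨fun hω => ?_, fun hω => by simpa [hinter, indicator_of_notMem hω] using hDω.2⟩
    have hgap : cexpInd F1 F2 P B ω + δ < g ω := hω
    have hval : cexpInd F1 F2 P (T ∩ (A \ B)) ω = cexpInd F1 F2 P A ω - cexpInd F1 F2 P B ω := by
      rw [hinter, indicator_of_mem hω, hsd, Pi.sub_apply]
    rw [hval] at hDω hA'1
    refine ⟨hDω.1 (by linarith), ?_⟩
    calc cexpInd F1 F2 P D ω
        ≤ (1 / 2) ^ n * (cexpInd F1 F2 P A ω - cexpInd F1 F2 P B ω) := hDω.2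
      _ ≤ (1 / 2) ^ n * 1 := by gcongr; exact hA'1
      _ < δ := by linarith
  have hDA : D ⊆ A \ B := hDA'.trans inter_subset_right
  refine ⟨D, hD, hDA, fun hD0 => hT (measure_eq_zero_iff_ae_notMem.mpr ?_), ?_⟩
  · filter_upwards [hDT, cexpInd_ae_eq_zero P hD0] with ω hω hD0ω hmem
    exact (hω.1 hmem).1.ne' hD0ω
  · filter_upwards [cexpInd_union P hB hD (disjoint_sdiff_right.mono_right hDA), hDT, hBg]
      with ω hu hω hBω
    rw [hu, Pi.add_apply]
    by_cases hmem : ω ∈ T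
    · have hgap : cexpInd F1 F2 P B ω + δ < g ω := hmem
      linarith [(hω.1 hmem).2]
    · linarith [hω.2 hmem]

lemma exists_subset_cexpInd_eq (hat : CondAtomless F1 F2 P) (hle : F1 ≤ F2) {A : Set Ω}
    (hA : MeasurableSet[F2] A) {g : Ω → ℝ} (hg : Measurable[F1] g) (hg0 : 0 ≤ᵐ[P] g)
    (hgA : g ≤ᵐ[P] cexpInd F1 F2 P A) :
    ∃ B : Set Ω, MeasurableSet[F2] B ∧ B ⊆ A ∧ cexpInd F1 F2 P B =ᵐ[P] g := by
  set 𝒢 : Set (Set Ω) := {B | MeasurableSet[F2] B ∧ B ⊆ A ∧ cexpInd F1 F2 P B ≤ᵐ[P] g}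
  have hempty : ∅ ∈ 𝒢 := ⟨MeasurableSet.empty, empty_subset A, by rw [cexpInd_empty]; exact hg0⟩
  obtain ⟨B, hBmono, hB, hBmax⟩ := exists_monotone_seq_measureReal_le_add P ⟨∅, hempty⟩
    (fun n : ℕ => 1 / ((n : ℝ) + 1)) fun n => Nat.one_div_pos_of_nat
  have hU : ⋃ n, B n ∈ 𝒢 := ⟨MeasurableSet.iUnion fun n => (hB n).1,
    iUnion_subset fun n => (hB n).2.1,
    cexpInd_iUnion_le_of_monotone P hle (fun n => (hB n).1) hBmono hg fun n => (hB n).2.2⟩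
  refine ⟨_, hU.1, hU.2.1, hU.2.2.antisymm ?_⟩
  by_contra hgU
  obtain ⟨D, hD, hDA, hD0, hUD⟩ := hat.exists_cexpInd_union_le hle hA hU.1 hU.2.1 hg hgA hU.2.2 hgU
  have hUD𝒢 : (⋃ n, B n) ∪ D ∈ 𝒢 :=
    ⟨hU.1.union hD, union_subset hU.2.1 (hDA.trans sdiff_subset), hUD⟩
  have hsum : P.real ((⋃ n, B n) ∪ D) = P.real (⋃ n, B n) + P.real D :=
    measureReal_union (disjoint_sdiff_right.mono_right hDA) hD
  have hDpos : 0 < P.real D := ENNReal.toReal_pos hD0 (measure_ne_top P D)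
  obtain ⟨n, hn⟩ := exists_nat_one_div_lt hDpos
  have hmax := hBmax n _ hUD𝒢 ((subset_iUnion B n).trans subset_union_left)
  have hle_U := measureReal_mono (μ := P) (subset_iUnion B (n + 1))
  linarith

end CondAtomless

theorem stmt1 {Ω : Type*} (F1 F2 : MeasurableSpace Ω) (hle : F1 ≤ F2)
    (P : @Measure Ω F2) (hP : @IsProbabilityMeasure Ω F2 P)
    (hatomless : CondAtomless F1 F2 P)
    (C : Set Ω) (hC : MeasurableSet[F2] C)
    (h : Ω → ℝ) (hmeas : Measurable[F1] h) (hrange : ∀ ω, h ω ∈ Set.Icc (0 : ℝ) 1) :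
    ∃ B : Set Ω, MeasurableSet[F2] B ∧ B ⊆ C ∧
      cexpInd F1 F2 P B =ᵐ[P] fun ω => h ω * cexpInd F1 F2 P C ω := by
  refine hatomless.exists_subset_cexpInd_eq hle hC (hmeas.mul (measurable_cexpInd P C)) ?_ ?_
  · filter_upwards [cexpInd_nonneg P C] with ω hω using mul_nonneg (hrange ω).1 hω
  · filter_upwards [cexpInd_nonneg P C] with ω hω using mul_le_of_le_one_left hω (hrange ω).2
end

section
/- Let Q_1, …, Q_n be probability measures on a measurable space (Ω, A). Let Q_0 = Σ_k λ_k Q_k be a convex combination with every λ_k > 0, and let f_k be an A-measurable version of the Radon–Nikodym derivative dQ_k/dQ_0. Let Q be another measure dominating each Q_k, with g_k an A-measurable version of dQ_k/dQ. Let N = {N ∈ A : Q_0[N] = 0}, let F be the σ-algebra generated by f_1, …, f_n and let G be the σ-algebra generated by g_1, …, g_n. Then F ⊆ σ(G, N), the σ-algebra generated by G together with the Q_0-null sets N. -/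
/-! With `D := ∑ k, lam k • g k` we have `Q0 = Q'.withDensity D`, so the chain rule for densities
gives `D * f k = g k` `Q'`-a.e., i.e. `f k = g k / D` `Q0`-a.e. The right-hand side is measurable
for `σ(g)`, and a function that agrees off a `Q0`-null set with a `σ(g)`-measurable one is
measurable for `σ(g)` enlarged by the `Q0`-null sets. -/

open MeasureTheory
open scoped ENNReal

theorem ENNReal.eq_div_of_mul_eq {a b c : ℝ≥0∞} (ha : a ≠ 0) (hc : c ≠ ∞) (h : a * b = c) :
    b = c / a := by
  rcases eq_or_ne a ∞ with rfl | ha_top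
  · have hb : b = 0 := by
      by_contra hb
      exact hc (h ▸ ENNReal.top_mul hb)
    simp [hb]
  · exact (ENNReal.eq_div_iff ha ha_top).mpr h

namespace MeasureTheory

variable {Ω : Type*}

theorem MeasurableSet.sup_generateFrom_null_of_ae_eq {m mΩ : MeasurableSpace Ω} (hm : m ≤ mΩ)
    {μ : Measure Ω} {s t : Set Ω} (hs : MeasurableSet s) (ht : MeasurableSet[m] t)
    (hst : s =ᵐ[μ] t) :
    MeasurableSet[m ⊔ MeasurableSpace.generateFrom {N | MeasurableSet N ∧ μ N = 0}] s := by
  obtain ⟨hst_null, hts_null⟩ := ae_eq_set.mp hst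
  have hnull : ∀ {N : Set Ω}, MeasurableSet N → μ N = 0 →
      MeasurableSet[m ⊔ MeasurableSpace.generateFrom {N | MeasurableSet N ∧ μ N = 0}] N :=
    fun hN hμN => le_sup_right (a := m) _ (MeasurableSpace.measurableSet_generateFrom ⟨hN, hμN⟩)
  have hdecomp : s = (t ∪ s \ t) \ (t \ s) := by
    ext x
    by_cases x ∈ s <;> by_cases x ∈ t <;> simp_all
  rw [hdecomp]
  exact ((le_sup_left (b := MeasurableSpace.generateFrom _) _ ht).union
    (hnull (hs.diff (hm t ht)) hst_null)).diff (hnull ((hm t ht).diff hs) hts_null)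

theorem Measurable.sup_generateFrom_null_of_ae_eq {m mΩ : MeasurableSpace Ω} (hm : m ≤ mΩ)
    {β : Type*} [MeasurableSpace β] {μ : Measure Ω} {f h : Ω → β} (hf : Measurable f)
    (hh : Measurable[m] h) (hfh : f =ᵐ[μ] h) :
    Measurable[m ⊔ MeasurableSpace.generateFrom {N | MeasurableSet N ∧ μ N = 0}] f :=
  fun _ hA => MeasurableSet.sup_generateFrom_null_of_ae_eq hm (hf hA) (hh hA) (hfh.preimage _)

theorem withDensity_finset_sum {ι : Type*} [MeasurableSpace Ω] (μ : Measure Ω) (s : Finset ι)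
    {f : ι → Ω → ℝ≥0∞} (hf : ∀ i ∈ s, Measurable (f i)) :
    μ.withDensity (∑ i ∈ s, f i) = ∑ i ∈ s, μ.withDensity (f i) := by
  ext A hA
  simp only [withDensity_apply _ hA, Measure.coe_finsetSum, Finset.sum_apply]
  exact lintegral_finsetSum _ hf

theorem ae_eq_div_of_withDensity_eq [MeasurableSpace Ω] {μ ν : Measure Ω} {D f g : Ω → ℝ≥0∞}
    (hD : Measurable D) (hf : Measurable f) (hg : AEMeasurable g ν) (hμ : μ = ν.withDensity D)
    (hfg : μ.withDensity f = ν.withDensity g) (hg_fin : ∫⁻ x, g x ∂ν ≠ ∞) :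
    f =ᵐ[μ] g / D := by
  have hmul : g =ᵐ[ν] D * f := by
    rw [← withDensity_eq_iff hg (hD.mul hf).aemeasurable hg_fin, withDensity_mul ν hD hf, ← hμ,
      hfg]
  have hD_ne_zero : ∀ᵐ x ∂μ, D x ≠ 0 := hμ ▸ (ae_withDensity_iff hD).mpr (ae_of_all _ fun _ => id)
  have hμν : μ ≪ ν := hμ ▸ withDensity_absolutelyContinuous ν D
  filter_upwards [hμν.ae_le hmul, hD_ne_zero, hμν.ae_le (ae_lt_top' hg hg_fin)] with x hx hx0 hxt
  exact ENNReal.eq_div_of_mul_eq hx0 hxt.ne hx.symm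

end MeasureTheory

theorem stmt8_general {Ω : Type*} [mA : MeasurableSpace Ω] {n : ℕ}
    (Q : Fin n → Measure Ω) (hQprob : ∀ k, IsProbabilityMeasure (Q k))
    (lam : Fin n → ℝ≥0∞)
    (Q0 : Measure Ω) (hQ0 : Q0 = ∑ k, lam k • Q k)
    (f : Fin n → Ω → ℝ≥0∞) (hf : ∀ k, Measurable (f k))
    (hfver : ∀ k, ∀ s : Set Ω, MeasurableSet s → Q k s = ∫⁻ x in s, f k x ∂Q0)
    (Q' : Measure Ω)
    (g : Fin n → Ω → ℝ≥0∞) (hg : ∀ k, Measurable (g k))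
    (hgver : ∀ k, ∀ s : Set Ω, MeasurableSet s → Q k s = ∫⁻ x in s, g k x ∂Q') :
    (⨆ k, MeasurableSpace.comap (f k) inferInstance) ≤
      (⨆ k, MeasurableSpace.comap (g k) inferInstance) ⊔
        MeasurableSpace.generateFrom {N : Set Ω | MeasurableSet N ∧ Q0 N = 0} := by
  have hQf : ∀ k, Q k = Q0.withDensity (f k) := fun k =>
    Measure.ext fun s hs => by rw [hfver k s hs, withDensity_apply _ hs]
  have hQg : ∀ k, Q k = Q'.withDensity (g k) := fun k =>
    Measure.ext fun s hs => by rw [hgver k s hs, withDensity_apply _ hs]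
  set D := ∑ k, lam k • g k
  have hD_meas : ∀ {m : MeasurableSpace Ω}, (∀ k, Measurable[m] (g k)) → Measurable[m] D :=
    fun hg_m => by fun_prop
  have hD : Q0 = Q'.withDensity D := by
    rw [hQ0, withDensity_finset_sum _ _ fun k _ => (hg k).const_smul _]
    exact Finset.sum_congr rfl fun k _ => by rw [withDensity_smul _ (hg k), hQg]
  have hf_ae : ∀ k, f k =ᵐ[Q0] g k / D := fun k => by
    have := hQprob k
    refine ae_eq_div_of_withDensity_eq (hD_meas hg) (hf k) (hg k).aemeasurable hD
      ((hQf k).symm.trans (hQg k)) ?_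
    rw [← setLIntegral_univ, ← withDensity_apply _ .univ, ← hQg]
    exact measure_ne_top _ _
  have hg_σ : ∀ k, Measurable[⨆ j, MeasurableSpace.comap (g j) inferInstance] (g k) := fun k =>
    Measurable.of_comap_le (le_iSup (fun j => MeasurableSpace.comap (g j) inferInstance) k)
  refine iSup_le fun k => Measurable.comap_le ?_
  exact Measurable.sup_generateFrom_null_of_ae_eq (iSup_le fun j => (hg j).comap_le) (hf k)
    ((hg_σ k).div (hD_meas hg_σ)) (hf_ae k)

theorem stmt8 {Ω : Type*} [mA : MeasurableSpace Ω] {n : ℕ}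
    (Q : Fin n → Measure Ω) (hQprob : ∀ k, IsProbabilityMeasure (Q k))
    (lam : Fin n → ℝ≥0∞) (hlam : ∀ k, 0 < lam k) (hlamsum : ∑ k, lam k = 1)
    (Q0 : Measure Ω) (hQ0 : Q0 = ∑ k, lam k • Q k)
    (f : Fin n → Ω → ℝ≥0∞) (hf : ∀ k, Measurable (f k))
    (hfver : ∀ k, ∀ s : Set Ω, MeasurableSet s → Q k s = ∫⁻ x in s, f k x ∂Q0)
    (Q' : Measure Ω) (hdom : ∀ k, Q k ≪ Q')
    (g : Fin n → Ω → ℝ≥0∞) (hg : ∀ k, Measurable (g k))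
    (hgver : ∀ k, ∀ s : Set Ω, MeasurableSet s → Q k s = ∫⁻ x in s, g k x ∂Q') :
    (⨆ k, MeasurableSpace.comap (f k) inferInstance) ≤
      (⨆ k, MeasurableSpace.comap (g k) inferInstance) ⊔
        MeasurableSpace.generateFrom {N : Set Ω | MeasurableSet N ∧ Q0 N = 0} :=
  stmt8_general (mA := mA) Q hQprob lam Q0 hQ0 f hf hfver Q' g hg hgver
end

section
/- Suppose the conditional expectation with respect to F1 is given by a kernel K, i.e., K : Ω × F2 → [0,1] satisfies: (1) for every ω ∈ Ω, K(ω, ·) is a probability measure on F2; (2) for each A ∈ F2, the map ω ↦ K(ω, A) is F1-measurable; (3) for each ξ ∈ L¹(Ω, F2, P), E[ξ | F1](ω) = ∫ ξ(τ) K(ω, dτ) for P-almost every ω. If F2 is atomless conditionally to F1, then for P-almost every ω ∈ Ω the probability measure K(ω, ·) is atomless on F2, i.e., for every A ∈ F2 with K(ω, A) > 0 there is B ∈ F2, B ⊆ A, with 0 < K(ω, B) < K(ω, A). -/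
open MeasureTheory ProbabilityTheory Set
open scoped ENNReal

/-- `K` is a probability kernel realizing the conditional expectation with respect to `F1`. -/
def IsCondKernel {Ω : Type*} (F1 F2 : MeasurableSpace Ω) (P : @Measure Ω F2)
    (K : Ω → @Measure Ω F2) : Prop :=
  (∀ ω, @IsProbabilityMeasure Ω F2 (K ω)) ∧
  (∀ A : Set Ω, MeasurableSet[F2] A → Measurable[F1] fun ω => K ω A) ∧
  (∀ ξ : Ω → ℝ, Integrable ξ P → P[ξ|F1] =ᵐ[P] fun ω => ∫ τ, ξ τ ∂(K ω))

/-! For `E ∈ F1` the kernel is a.e. proper, `K ω E = 1_E ω`, so two subsets of `A` can be glued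
along an `F1`-measurable set and the kernel evaluates the gluing pointwise. Gluing the set given by
conditional atomlessness with its complement in `A` halves the mass, so iterating gives subsets of
kernel mass at most `2⁻ᵏ`. An exhaustion argument under `P` yields, for each `k`, countably many
such sets covering `Ω` up to a kernel-null set. Off one `P`-null set all these covers work at once,
and an atom of `K ω` of mass larger than `2⁻ᵏ` meets every piece of the `k`-th cover in a null
set, hence is null. -/

theorem exists_countable_sUnion_compl_null {α : Type*} {m : MeasurableSpace α} (μ : Measure α)
    [IsFiniteMeasure μ] (p : Set α → Prop)
    (h : ∀ R, MeasurableSet R → μ R ≠ 0 → ∃ B ⊆ R, MeasurableSet B ∧ p B ∧ μ B ≠ 0) :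
    ∃ 𝒮 : Set (Set α), 𝒮.Countable ∧ (∀ s ∈ 𝒮, MeasurableSet s ∧ p s) ∧ μ (⋃₀ 𝒮)ᶜ = 0 := by
  set 𝓒 : Set (Set (Set α)) := {𝒮 | 𝒮.Countable ∧ ∀ s ∈ 𝒮, MeasurableSet s ∧ p s}
  obtain ⟨u, -, hu, hu𝓒⟩ := exists_seq_tendsto_sSup (S := (fun 𝒮 => μ (⋃₀ 𝒮)) '' 𝓒)
    ⟨_, ∅, ⟨countable_empty, fun _ h => h.elim⟩, rfl⟩ (OrderTop.bddAbove _)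
  choose 𝒮 h𝒮 hu𝒮 using hu𝓒
  obtain rfl : u = fun n => μ (⋃₀ 𝒮 n) := funext fun n => (hu𝒮 n).symm
  set 𝒯 := ⋃ n, 𝒮 n
  have h𝒯 : 𝒯 ∈ 𝓒 :=
    ⟨countable_iUnion fun n => (h𝒮 n).1, fun s hs =>
      let ⟨n, hn⟩ := mem_iUnion.mp hs; (h𝒮 n).2 s hn⟩
  -- a countable union of maximizing families attains the supremum
  have hmax : ∀ 𝒮' ∈ 𝓒, μ (⋃₀ 𝒮') ≤ μ (⋃₀ 𝒯) := fun 𝒮' h𝒮' =>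
    (le_sSup (mem_image_of_mem _ h𝒮')).trans <| le_of_tendsto' hu fun n =>
      measure_mono (sUnion_mono (subset_iUnion 𝒮 n))
  refine ⟨𝒯, h𝒯.1, h𝒯.2, ?_⟩
  by_contra hR
  have h𝒯meas : MeasurableSet (⋃₀ 𝒯) := .sUnion h𝒯.1 fun s hs => (h𝒯.2 s hs).1
  obtain ⟨B, hBR, hB, hpB, hB0⟩ := h _ h𝒯meas.compl hR
  have := hmax (insert B 𝒯) ⟨h𝒯.1.insert B, forall_mem_insert.mpr ⟨⟨hB, hpB⟩, h𝒯.2⟩⟩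
  rw [sUnion_insert, measure_union' (subset_compl_iff_disjoint_right.mp hBR) hB] at this
  exact hB0 <| nonpos_iff_eq_zero.mp <|
    ENNReal.le_of_add_le_add_right (measure_ne_top _ _) (this.trans_eq (zero_add _).symm)

theorem exists_subset_measure_pos_lt_of_countable_cover {α : Type*} {m : MeasurableSpace α}
    (ν : Measure α)
    (h : ∀ k : ℕ, ∃ 𝒮 : Set (Set α), 𝒮.Countable ∧ (∀ s ∈ 𝒮, MeasurableSet s ∧ ν s ≤ (2 ^ k)⁻¹)
      ∧ ν (⋃₀ 𝒮)ᶜ = 0)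
    {A : Set α} (hA : MeasurableSet A) (hA0 : 0 < ν A) :
    ∃ B, MeasurableSet B ∧ B ⊆ A ∧ 0 < ν B ∧ ν B < ν A := by
  obtain ⟨k, hk⟩ := ENNReal.exists_inv_two_pow_lt hA0.ne'
  obtain ⟨𝒮, h𝒮c, h𝒮, h𝒮null⟩ := h k
  by_contra! hatom
  have hpiece : ∀ s ∈ 𝒮, ν (A ∩ s) = 0 := fun s hs => by
    by_contra! hne
    refine (hatom _ (hA.inter (h𝒮 s hs).1) inter_subset_left hne.bot_lt).not_gt ?_
    calc ν (A ∩ s) ≤ ν s := measure_mono inter_subset_right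
      _ ≤ (2 ^ k)⁻¹ := (h𝒮 s hs).2
      _ < ν A := by rwa [ENNReal.inv_pow]
  refine hA0.ne' ?_
  rw [← measure_inter_conull h𝒮null, sUnion_eq_biUnion, inter_iUnion₂]
  exact (measure_biUnion_null_iff h𝒮c).mpr hpiece

namespace IsCondKernel

variable {Ω : Type*} {F1 F2 : MeasurableSpace Ω} {P : @Measure Ω F2} {K : Ω → @Measure Ω F2}
  {A B E : Set Ω}

lemma cexpInd_ae_eq [IsFiniteMeasure P] (hK : IsCondKernel F1 F2 P K)
    (hA : MeasurableSet[F2] A) : cexpInd F1 F2 P A =ᵐ[P] fun ω => (K ω A).toReal := by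
  filter_upwards [hK.2.2 _ ((integrable_const (1 : ℝ)).indicator hA)] with ω hω
  have := hK.1 ω
  rw [cexpInd, hω, integral_indicator_const _ hA, smul_eq_mul, mul_one, measureReal_def]

lemma measure_ne_top (hK : IsCondKernel F1 F2 P K) (ω : Ω) (A : Set Ω) : K ω A ≠ ∞ :=
  have := hK.1 ω; MeasureTheory.measure_ne_top _ _

lemma lintegral_eq (hle : F1 ≤ F2) [IsFiniteMeasure P] (hK : IsCondKernel F1 F2 P K)
    (hB : MeasurableSet[F2] B) : ∫⁻ ω, K ω B ∂P = P B := by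
  calc ∫⁻ ω, K ω B ∂P = ENNReal.ofReal (∫ ω, (K ω B).toReal ∂P) := by
        rw [ofReal_integral_eq_lintegral_ofReal (integrable_condExp.congr (hK.cexpInd_ae_eq hB))
          (.of_forall fun _ => ENNReal.toReal_nonneg)]
        simp_rw [ENNReal.ofReal_toReal (hK.measure_ne_top _ _)]
    _ = ENNReal.ofReal (∫ ω, cexpInd F1 F2 P B ω ∂P) :=
        congrArg _ (integral_congr_ae (hK.cexpInd_ae_eq hB)).symm
    _ = P B := by
        rw [cexpInd, integral_condExp hle, integral_indicator_const _ hB, smul_eq_mul, mul_one,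
          measureReal_def, ENNReal.ofReal_toReal (MeasureTheory.measure_ne_top _ _)]

lemma measure_eq_zero_iff (hle : F1 ≤ F2) [IsFiniteMeasure P] (hK : IsCondKernel F1 F2 P K)
    (hB : MeasurableSet[F2] B) : P B = 0 ↔ ∀ᵐ ω ∂P, K ω B = 0 := by
  rw [← hK.lintegral_eq hle hB, lintegral_eq_zero_iff ((hK.2.1 B hB).mono hle le_rfl)]
  rfl

lemma ae_measure_compl_eq_zero (hle : F1 ≤ F2) [IsFiniteMeasure P] (hK : IsCondKernel F1 F2 P K)
    (hE : MeasurableSet[F1] E) : ∀ᵐ ω ∂P, ω ∈ E → K ω Eᶜ = 0 := by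
  have hEind : cexpInd F1 F2 P E = E.indicator fun _ => (1 : ℝ) :=
    condExp_of_stronglyMeasurable hle (stronglyMeasurable_const.indicator hE)
      ((integrable_const (1 : ℝ)).indicator (hle _ hE))
  filter_upwards [hK.cexpInd_ae_eq (hle _ hE)] with ω hω hωE
  have := hK.1 ω
  rw [prob_compl_eq_zero_iff (hle _ hE), ← ENNReal.toReal_eq_one_iff, ← hω, hEind,
    indicator_of_mem hωE]

lemma ae_measure_ite (hle : F1 ≤ F2) [IsFiniteMeasure P] (hK : IsCondKernel F1 F2 P K)
    (hE : MeasurableSet[F1] E) (A B : Set Ω) :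
    ∀ᵐ ω ∂P, (ω ∈ E → K ω (E.ite A B) = K ω A) ∧ (ω ∉ E → K ω (E.ite A B) = K ω B) := by
  filter_upwards [hK.ae_measure_compl_eq_zero hle hE,
    hK.ae_measure_compl_eq_zero hle hE.compl] with ω hE' hEc'
  refine ⟨fun hω => ?_, fun hω => ?_⟩
  · rw [← measure_inter_conull (hE' hω), ite_inter_self, measure_inter_conull (hE' hω)]
  · rw [← measure_inter_conull (hEc' hω), ite_inter_compl_self, measure_inter_conull (hEc' hω)]


lemma exists_subset_ae_pos_lt [IsFiniteMeasure P] (hK : IsCondKernel F1 F2 P K)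
    (hatomless : CondAtomless F1 F2 P) (hA : MeasurableSet[F2] A) :
    ∃ B, MeasurableSet[F2] B ∧ B ⊆ A ∧ ∀ᵐ ω ∂P, 0 < K ω A → 0 < K ω B ∧ K ω B < K ω A := by
  obtain ⟨B, hB, hBA, hBpos⟩ := hatomless A hA
  refine ⟨B, hB, hBA, ?_⟩
  filter_upwards [hBpos, hK.cexpInd_ae_eq hA, hK.cexpInd_ae_eq hB] with ω hω hωA hωB hA0
  rw [hωA, hωB, ENNReal.toReal_pos_iff, ENNReal.toReal_pos_iff,
    ENNReal.toReal_lt_toReal (hK.measure_ne_top ω B) (hK.measure_ne_top ω A)] at hω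
  obtain ⟨⟨hB0, -⟩, hBA⟩ := hω ⟨hA0, (hK.measure_ne_top ω A).lt_top⟩
  exact ⟨hB0, hBA⟩

lemma exists_subset_ae_two_mul_le (hle : F1 ≤ F2) [IsFiniteMeasure P]
    (hK : IsCondKernel F1 F2 P K) (hatomless : CondAtomless F1 F2 P) (hA : MeasurableSet[F2] A) :
    ∃ B, MeasurableSet[F2] B ∧ B ⊆ A ∧
      ∀ᵐ ω ∂P, 2 * K ω B ≤ K ω A ∧ (0 < K ω A → 0 < K ω B) := by
  obtain ⟨B, hB, hBA, hBpos⟩ := hK.exists_subset_ae_pos_lt hatomless hA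
  -- Keep `B` where it carries at most half of the mass of `A` and take `A \ B` elsewhere;
  -- the switching set is `F1`-measurable, so the kernel sees the switch pointwise.
  set E := {ω | 2 * K ω B ≤ K ω A}
  have hE : MeasurableSet[F1] E := measurableSet_le ((hK.2.1 B hB).const_mul 2) (hK.2.1 A hA)
  refine ⟨E.ite B (A \ B), (hle _ hE).ite hB (hA.diff hB),
    (ite_subset_union _ _ _).trans (union_subset hBA sdiff_subset), ?_⟩
  filter_upwards [hBpos, hK.ae_measure_ite hle hE B (A \ B)] with ω hω hite
  by_cases hωE : ω ∈ E
  · rw [hite.1 hωE]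
    exact ⟨hωE, fun h => (hω h).1⟩
  · have hAB : K ω A ≤ K ω B + K ω B := two_mul (K ω B) ▸ (not_le.mp hωE).le
    rw [hite.2 hωE, measure_sdiff hBA hB.nullMeasurableSet (hK.measure_ne_top ω B)]
    refine ⟨?_, fun h => tsub_pos_of_lt (hω h).2⟩
    calc 2 * (K ω A - K ω B) = (K ω A - K ω B) + (K ω A - K ω B) := two_mul _
      _ ≤ (K ω A - K ω B) + K ω B := add_le_add le_rfl (tsub_le_iff_right.mpr hAB)
      _ = K ω A := tsub_add_cancel_of_le (measure_mono hBA)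

lemma exists_subset_ae_two_pow_mul_le (hle : F1 ≤ F2) [IsFiniteMeasure P]
    (hK : IsCondKernel F1 F2 P K) (hatomless : CondAtomless F1 F2 P) (n : ℕ)
    (hA : MeasurableSet[F2] A) :
    ∃ B, MeasurableSet[F2] B ∧ B ⊆ A ∧
      ∀ᵐ ω ∂P, 2 ^ n * K ω B ≤ K ω A ∧ (0 < K ω A → 0 < K ω B) := by
  induction n with
  | zero => exact ⟨A, hA, subset_rfl, .of_forall fun ω => ⟨by simp, id⟩⟩
  | succ n ih =>
    obtain ⟨C, hC, hCA, hCA'⟩ := ih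
    obtain ⟨B, hB, hBC, hBC'⟩ := hK.exists_subset_ae_two_mul_le hle hatomless hC
    refine ⟨B, hB, hBC.trans hCA, ?_⟩
    filter_upwards [hCA', hBC'] with ω hωC hωB
    refine ⟨?_, hωB.2 ∘ hωC.2⟩
    calc 2 ^ (n + 1) * K ω B = 2 ^ n * (2 * K ω B) := by rw [pow_succ, mul_assoc]
      _ ≤ 2 ^ n * K ω C := mul_le_mul_right hωB.1 _
      _ ≤ K ω A := hωC.1

lemma exists_countable_cover_ae_le_inv_two_pow (hle : F1 ≤ F2) [IsFiniteMeasure P]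
    (hK : IsCondKernel F1 F2 P K) (hatomless : CondAtomless F1 F2 P) (k : ℕ) :
    ∃ 𝒮 : Set (Set Ω), 𝒮.Countable ∧
      (∀ s ∈ 𝒮, MeasurableSet[F2] s ∧ ∀ᵐ ω ∂P, K ω s ≤ (2 ^ k)⁻¹) ∧
      ∀ᵐ ω ∂P, K ω (⋃₀ 𝒮)ᶜ = 0 := by
  obtain ⟨𝒮, h𝒮c, h𝒮, hnull⟩ :=
    exists_countable_sUnion_compl_null P (fun s => ∀ᵐ ω ∂P, K ω s ≤ (2 ^ k)⁻¹) fun R hR hPR => by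
      obtain ⟨B, hB, hBR, hBR'⟩ := hK.exists_subset_ae_two_pow_mul_le hle hatomless k hR
      refine ⟨B, hBR, hB, ?_, ?_⟩
      · filter_upwards [hBR'] with ω hω
        have := hK.1 ω
        rw [ENNReal.le_inv_iff_mul_le, mul_comm]
        exact hω.1.trans prob_le_one
      · rw [Ne, hK.measure_eq_zero_iff hle hR] at hPR
        rw [Ne, hK.measure_eq_zero_iff hle hB]
        refine fun hB0 => hPR ?_
        filter_upwards [hB0, hBR'] with ω hωB hω
        by_contra hR0
        exact (hω.2 (pos_iff_ne_zero.mpr hR0)).ne' hωB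
  exact ⟨𝒮, h𝒮c, h𝒮, (hK.measure_eq_zero_iff hle
    (MeasurableSet.sUnion h𝒮c fun s hs => (h𝒮 s hs).1).compl).mp hnull⟩

end IsCondKernel

theorem stmt9 {Ω : Type*} (F1 F2 : MeasurableSpace Ω) (hle : F1 ≤ F2)
    (P : @Measure Ω F2) (hP : @IsProbabilityMeasure Ω F2 P)
    (K : Ω → @Measure Ω F2) (hK : IsCondKernel F1 F2 P K)
    (hatomless : CondAtomless F1 F2 P) :
    ∀ᵐ ω ∂P, ∀ A : Set Ω, MeasurableSet[F2] A → 0 < K ω A →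
      ∃ B : Set Ω, MeasurableSet[F2] B ∧ B ⊆ A ∧ 0 < K ω B ∧ K ω B < K ω A := by
  choose 𝒮 h𝒮c h𝒮 hnull using hK.exists_countable_cover_ae_le_inv_two_pow hle hatomless
  have hsmall : ∀ᵐ ω ∂P, ∀ k, ∀ s ∈ 𝒮 k, K ω s ≤ (2 ^ k)⁻¹ :=
    ae_all_iff.mpr fun k => (ae_ball_iff (h𝒮c k)).mpr fun s hs => (h𝒮 k s hs).2
  filter_upwards [hsmall, ae_all_iff.mpr hnull] with ω hωsmall hωnull A hA hA0
  exact exists_subset_measure_pos_lt_of_countable_cover (K ω)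
    (fun k => ⟨𝒮 k, h𝒮c k, fun s hs => ⟨(h𝒮 k s hs).1, hωsmall k s hs⟩, hωnull k⟩) hA hA0
end
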